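/- arXiv:1507.08490 — 2 statements merged into one kernel-verified Lean document; each statement's English description precedes it below -/
import Mathlib

section
/- Let Ω ⊆ ℝ^d be open, bounded and convex, and let v : ℝ^d → ℝ be twice continuously differentiable on an open neighborhood of the closure of Ω and convex on Ω. For each h > 0 let M_h be a map assigning to the restriction r_h(v) of v to the lattice hℤ^d a real-valued function M_h[r_h v] on Ω_h = Ω ∩ hℤ^d, and assume the family (M_h) is consistent at v: for every sequence h_k → 0⁺ and points x_{h_k} ∈ Ω_{h_k} with x_{h_k} → x ∈ Ω, one has M_{h_k}[r_{h_k} v](x_{h_k}) → det D²v(x). Then for every Borel set B ⊆ Ω whose closure is a compact subset of Ω and whose topological boundary has Lebesgue measure zero, h^d ∑_{x ∈ B ∩ Ω_h} M_h[r_h v](x) converges to ∫_B det D²v(x) dx as h → 0⁺; that is, the discrete measures h^d M_h[r_h v] converge weakly to the Monge–Ampère measure det D²v dx of v. -/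
/-!
Compare `h^d ∑_{B ∩ hℤ^d} M_h` with the Riemann sum `h^d ∑_{B ∩ hℤ^d} det D²v`. On the compact set
`closure B ⊆ Ω` consistency is uniform (by a subsequence argument), and `h^d #(B ∩ hℤ^d) → |B|`
stays bounded, so the two sums differ by `o(1)`. The Riemann sum is the integral of the step
function `y ↦ 1_B det D²v (h⌊y/h⌋)`, which converges to `1_B det D²v` outside `∂B`, a null set;
dominated convergence gives the limit `∫_B det D²v`.
-/

open Filter MeasureTheory

/-- The scaled lattice hℤ^d = { m h : m ∈ ℤ^d } ⊆ ℝ^d. -/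
def latticeSet (d : ℕ) (h : ℝ) : Set (Fin d → ℝ) :=
  {x | ∃ m : Fin d → ℤ, x = fun i => (m i : ℝ) * h}

/-- The determinant of the Hessian matrix D²v(x) of v at x. -/
noncomputable def hessDet (d : ℕ) (v : (Fin d → ℝ) → ℝ) (x : Fin d → ℝ) : ℝ :=
  (Matrix.of fun i j : Fin d =>
    iteratedFDeriv ℝ 2 v x ![Pi.single i 1, Pi.single j 1]).det

open Metric Set Topology Bornology

theorem tendsto_mul_finsum_mem_zero_of_uniform {ι X : Type*} {l : Filter ι} {w : ι → ℝ}
    {S : ι → Set X} {a : ι → X → ℝ} {C : ℝ} (hw : ∀ᶠ i in l, 0 ≤ w i)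
    (hS : ∀ᶠ i in l, (S i).Finite) (hC : ∀ᶠ i in l, w i * (S i).ncard ≤ C)
    (ha : ∀ ε > 0, ∀ᶠ i in l, ∀ x ∈ S i, |a i x| ≤ ε) :
    Tendsto (fun i => w i * ∑ᶠ x ∈ S i, a i x) l (𝓝 0) := by
  rw [Metric.tendsto_nhds]
  intro ε hε
  set C' := max C 0 + 1
  have hC' : 0 < C' := by positivity
  filter_upwards [hw, hS, hC, ha (ε / (2 * C')) (by positivity)] with i hwi hSi hCi hai
  have hsum : |∑ᶠ x ∈ S i, a i x| ≤ (S i).ncard * (ε / (2 * C')) := by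
    rw [finsum_mem_eq_finite_toFinset_sum _ hSi, Set.ncard_eq_toFinset_card _ hSi]
    refine (Finset.abs_sum_le_sum_abs _ _).trans ?_
    simpa using Finset.sum_le_card_nsmul _ _ _ fun x hx => hai x (hSi.mem_toFinset.1 hx)
  rw [Real.dist_eq, sub_zero, abs_mul, abs_of_nonneg hwi]
  calc w i * |∑ᶠ x ∈ S i, a i x| ≤ w i * (S i).ncard * (ε / (2 * C')) := by
        rw [mul_assoc]; exact mul_le_mul_of_nonneg_left hsum hwi
    _ ≤ C' * (ε / (2 * C')) := by
        gcongr; linarith [le_max_left C 0]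
    _ = ε / 2 := by field_simp
    _ < ε := half_lt_self hε

namespace DiscreteMongeAmpere

variable {d : ℕ}

noncomputable def latticeFloor (h : ℝ) (y : Fin d → ℝ) : Fin d → ℝ :=
  fun i => ⌊y i / h⌋ * h

def cube (x : Fin d → ℝ) (h : ℝ) : Set (Fin d → ℝ) :=
  univ.pi fun i => Ico (x i) (x i + h)

lemma latticeFloor_mem_latticeSet (h : ℝ) (y : Fin d → ℝ) : latticeFloor h y ∈ latticeSet d h :=
  ⟨fun i => ⌊y i / h⌋, rfl⟩

lemma latticeFloor_eq_iff_mem_cube {h : ℝ} (hh : 0 < h) {x : Fin d → ℝ}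
    (hx : x ∈ latticeSet d h) (y : Fin d → ℝ) : latticeFloor h y = x ↔ y ∈ cube x h := by
  obtain ⟨m, rfl⟩ := hx
  simp only [latticeFloor, cube, funext_iff, mem_univ_pi, mem_Ico, mul_left_inj' hh.ne',
    Int.cast_inj, Int.floor_eq_iff, le_div_iff₀ hh, div_lt_iff₀ hh, add_mul, one_mul]

lemma mem_cube_latticeFloor {h : ℝ} (hh : 0 < h) (y : Fin d → ℝ) : y ∈ cube (latticeFloor h y) h :=
  (latticeFloor_eq_iff_mem_cube hh (latticeFloor_mem_latticeSet h y) y).1 rfl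

lemma dist_le_of_mem_cube {x y : Fin d → ℝ} {h : ℝ} (hh : 0 ≤ h) (hy : y ∈ cube x h) :
    dist y x ≤ h :=
  (dist_pi_le_iff hh).2 fun i => by
    have := hy i (mem_univ i)
    rw [Real.dist_eq, abs_le]
    constructor <;> linarith [this.1, this.2]

lemma volume_cube (x : Fin d → ℝ) {h : ℝ} (hh : 0 ≤ h) :
    volume (cube x h) = ENNReal.ofReal (h ^ d) := by
  simp [cube, volume_pi_pi, Real.volume_Ico, ← ENNReal.ofReal_pow hh]

lemma measurableSet_cube (x : Fin d → ℝ) (h : ℝ) : MeasurableSet (cube x h) :=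
  MeasurableSet.univ_pi fun _ => measurableSet_Ico

lemma tendsto_latticeFloor (y : Fin d → ℝ) :
    Tendsto (fun h => latticeFloor h y) (𝓝[>] 0) (𝓝 y) := by
  refine tendsto_iff_dist_tendsto_zero.2 <| squeeze_zero' (Eventually.of_forall fun _ => dist_nonneg)
    ?_ (tendsto_nhdsWithin_of_tendsto_nhds tendsto_id)
  filter_upwards [self_mem_nhdsWithin] with h hh
  rw [dist_comm]
  exact dist_le_of_mem_cube (le_of_lt hh) (mem_cube_latticeFloor hh y)

lemma _root_.Bornology.IsBounded.finite_inter_latticeSet {S : Set (Fin d → ℝ)} (hS : IsBounded S)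
    {h : ℝ} (hh : 0 < h) : (S ∩ latticeSet d h).Finite := by
  obtain ⟨R, hR⟩ := hS.subset_closedBall 0
  set c : Fin d → ℤ := fun _ => ⌈R / h⌉
  refine ((Set.finite_Icc (-c) c).image fun m i => (m i : ℝ) * h).subset ?_
  rintro _ ⟨hxS, m, rfl⟩
  have hm : ∀ i, |(m i : ℝ)| ≤ ⌈R / h⌉ := fun i => by
    have hi := (norm_le_pi_norm _ i).trans (mem_closedBall_zero_iff.1 (hR hxS))
    rw [Real.norm_eq_abs, abs_mul, abs_of_pos hh] at hi
    exact ((le_div_iff₀ hh).2 hi).trans (Int.le_ceil _)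
  refine ⟨m, ⟨fun i => ?_, fun i => ?_⟩, rfl⟩
  · exact_mod_cast (abs_le.1 (hm i)).1
  · exact_mod_cast (abs_le.1 (hm i)).2

lemma integrable_indicator_cube (x : Fin d → ℝ) {h : ℝ} (hh : 0 ≤ h) (c : ℝ) :
    Integrable ((cube x h).indicator fun _ => c) :=
  (integrable_indicator_iff (measurableSet_cube x h)).2
    (integrableOn_const (by simp [volume_cube x hh]))

lemma indicator_comp_latticeFloor_eq_sum {S : Set (Fin d → ℝ)} {h : ℝ} (hh : 0 < h)
    (hP : (S ∩ latticeSet d h).Finite) (g : (Fin d → ℝ) → ℝ) :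
    (fun y => S.indicator g (latticeFloor h y)) =
      fun y => ∑ x ∈ hP.toFinset, (cube x h).indicator (fun _ => g x) y := by
  classical
  funext y
  have hcube : ∀ x ∈ hP.toFinset, (cube x h).indicator (fun _ => g x) y =
      if latticeFloor h y = x then g x else 0 := fun x hx => by
    simp [indicator_apply, ← latticeFloor_eq_iff_mem_cube hh (hP.mem_toFinset.1 hx).2]
  rw [Finset.sum_congr rfl hcube, Finset.sum_ite_eq]
  simp [indicator_apply, latticeFloor_mem_latticeSet]

lemma integrable_indicator_comp_latticeFloor {S : Set (Fin d → ℝ)} (hS : IsBounded S) {h : ℝ}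
    (hh : 0 < h) (g : (Fin d → ℝ) → ℝ) :
    Integrable fun y => S.indicator g (latticeFloor h y) := by
  rw [indicator_comp_latticeFloor_eq_sum hh (hS.finite_inter_latticeSet hh)]
  exact integrable_finsetSum _ fun x _ => integrable_indicator_cube x hh.le (g x)

lemma integral_indicator_comp_latticeFloor {S : Set (Fin d → ℝ)} (hS : IsBounded S) {h : ℝ}
    (hh : 0 < h) (g : (Fin d → ℝ) → ℝ) :
    ∫ y, S.indicator g (latticeFloor h y) = h ^ d * ∑ᶠ x ∈ S ∩ latticeSet d h, g x := by
  have hP := hS.finite_inter_latticeSet hh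
  rw [indicator_comp_latticeFloor_eq_sum hh hP,
    integral_finsetSum _ fun x _ => integrable_indicator_cube x hh.le (g x),
    finsum_mem_eq_finite_toFinset_sum _ hP, Finset.mul_sum]
  refine Finset.sum_congr rfl fun x _ => ?_
  rw [integral_indicator_const _ (measurableSet_cube x h), measureReal_def, volume_cube x hh.le,
    ENNReal.toReal_ofReal (by positivity), smul_eq_mul, mul_comm]

/-- `h ^ d * ∑ f(x)` is the integral of the step function `y ↦ 1_B f (h ⌊y / h⌋)`, which converges
to `1_B f` off the null set `∂B`; conclude by dominated convergence. -/
theorem tendsto_mul_finsum_latticeSet {B : Set (Fin d → ℝ)} (hB : MeasurableSet B)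
    (hBb : IsBounded B) (hfr : volume (frontier B) = 0) {f : (Fin d → ℝ) → ℝ}
    (hf : ContinuousOn f (closure B)) :
    Tendsto (fun h => h ^ d * ∑ᶠ x ∈ B ∩ latticeSet d h, f x) (𝓝[>] 0)
      (𝓝 (∫ x in B, f x)) := by
  obtain ⟨C, hC⟩ := hBb.isCompact_closure.exists_bound_of_continuousOn hf
  replace hC : ∀ x ∈ closure B, ‖f x‖ ≤ max C 0 := fun x hx => (hC x hx).trans (le_max_left _ _)
  have hpos : ∀ᶠ h in 𝓝[>] (0 : ℝ), 0 < h := self_mem_nhdsWithin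
  have hle : ∀ᶠ h in 𝓝[>] (0 : ℝ), h ≤ 1 :=
    tendsto_nhdsWithin_of_tendsto_nhds tendsto_id (ge_mem_nhds one_pos)
  have hbound : ∀ᶠ h in 𝓝[>] (0 : ℝ), ∀ y,
      ‖B.indicator f (latticeFloor h y)‖ ≤ (cthickening 1 B).indicator (fun _ => max C 0) y := by
    filter_upwards [hpos, hle] with h hh h1 y
    by_cases hy : latticeFloor h y ∈ B
    · have hy1 : y ∈ cthickening 1 B := mem_cthickening_of_dist_le y _ 1 B hy
        ((dist_le_of_mem_cube hh.le (mem_cube_latticeFloor hh y)).trans h1)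
      rw [indicator_of_mem hy, indicator_of_mem hy1]
      exact hC _ (subset_closure hy)
    · rw [indicator_of_notMem hy, norm_zero]
      exact indicator_nonneg (fun _ _ => le_max_right _ _) y
  have hlim : ∀ᵐ y, Tendsto (fun h => B.indicator f (latticeFloor h y)) (𝓝[>] 0)
      (𝓝 (B.indicator f y)) := by
    filter_upwards [measure_eq_zero_iff_ae_notMem.1 hfr] with y hy
    exact ((hf.mono interior_subset_closure).continuousAt_indicator hy).tendsto.comp
      (tendsto_latticeFloor y)
  rw [← integral_indicator hB]
  refine (tendsto_integral_filter_of_dominated_convergence _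
    (hpos.mono fun h hh => (integrable_indicator_comp_latticeFloor hBb hh f).aestronglyMeasurable)
    (hbound.mono fun h hh => ae_of_all _ hh) ?_ hlim).congr' ?_
  · exact (integrable_indicator_iff isClosed_cthickening.measurableSet).2
      (integrableOn_const hBb.cthickening.measure_lt_top.ne)
  · filter_upwards [hpos] with h hh
    exact integral_indicator_comp_latticeFloor hBb hh f

theorem tendsto_mul_ncard_latticeSet {B : Set (Fin d → ℝ)} (hB : MeasurableSet B)
    (hBb : IsBounded B) (hfr : volume (frontier B) = 0) :
    Tendsto (fun h => h ^ d * (B ∩ latticeSet d h).ncard) (𝓝[>] 0) (𝓝 (volume.real B)) := by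
  have hvol := tendsto_mul_finsum_latticeSet hB hBb hfr (f := fun _ => (1 : ℝ)) continuousOn_const
  rw [setIntegral_const, smul_eq_mul, mul_one] at hvol
  refine hvol.congr' ?_
  filter_upwards [self_mem_nhdsWithin] with h (hh : 0 < h)
  rw [← finsum_one, Nat.cast_finsum_mem (hBb.finite_inter_latticeSet hh), Nat.cast_one]

def ConsistentOn (Ω : Set (Fin d → ℝ)) (M : ℝ → (Fin d → ℝ) → ℝ) (f : (Fin d → ℝ) → ℝ) : Prop :=
  ∀ hk : ℕ → ℝ, (∀ k, 0 < hk k) → Tendsto hk atTop (𝓝 0) →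
    ∀ (xk : ℕ → (Fin d → ℝ)) (x : Fin d → ℝ), x ∈ Ω →
      (∀ k, xk k ∈ Ω ∩ latticeSet d (hk k)) → Tendsto xk atTop (𝓝 x) →
      Tendsto (fun k => M (hk k) (xk k)) atTop (𝓝 (f x))

/-- A violating sequence of lattice points would have a subsequence converging in `K`, where
consistency and continuity of `f` contradict each other. -/
theorem ConsistentOn.eventually_forall_abs_sub_le {Ω K : Set (Fin d → ℝ)}
    {M : ℝ → (Fin d → ℝ) → ℝ} {f : (Fin d → ℝ) → ℝ} (hM : ConsistentOn Ω M f)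
    (hK : IsCompact K) (hKΩ : K ⊆ Ω) (hf : ContinuousOn f K) {ε : ℝ} (hε : 0 < ε) :
    ∀ᶠ h in 𝓝[>] 0, ∀ x ∈ K ∩ latticeSet d h, |M h x - f x| ≤ ε := by
  by_contra hcon
  obtain ⟨hk, hk_lim, hk_bad⟩ :=
    exists_seq_forall_of_frequently ((not_eventually.1 hcon).and_eventually self_mem_nhdsWithin)
  push Not at hk_bad
  choose xk hxk hxk_bad using fun k => (hk_bad k).1
  obtain ⟨a, haK, φ, hφ, hxφ⟩ := hK.tendsto_subseq fun k => (hxk k).1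
  have hMφ : Tendsto (fun k => M (hk (φ k)) (xk (φ k))) atTop (𝓝 (f a)) :=
    hM (hk ∘ φ) (fun k => (hk_bad (φ k)).2)
      ((tendsto_nhds_of_tendsto_nhdsWithin hk_lim).comp hφ.tendsto_atTop) (xk ∘ φ) a (hKΩ haK)
      (fun k => ⟨hKΩ (hxk (φ k)).1, (hxk (φ k)).2⟩) hxφ
  have hfφ : Tendsto (fun k => f (xk (φ k))) atTop (𝓝 (f a)) :=
    (hf a haK).tendsto.comp
      (tendsto_nhdsWithin_iff.2 ⟨hxφ, Eventually.of_forall fun k => (hxk (φ k)).1⟩)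
  have : ε ≤ 0 := by
    simpa using ge_of_tendsto' (hMφ.sub hfφ).abs fun k => (hxk_bad (φ k)).le
  linarith

theorem _root_.ContDiffOn.continuousOn_hessDet {U : Set (Fin d → ℝ)} {v : (Fin d → ℝ) → ℝ}
    (hv : ContDiffOn ℝ 2 v U) (hU : IsOpen U) : ContinuousOn (hessDet d v) U :=
  have hD2 := ContinuousOn.continuousOn_iteratedFDeriv hv hU (k := 2) le_rfl
  (continuous_id.matrix_det).comp_continuousOn <| continuousOn_pi.2 fun _ =>
    continuousOn_pi.2 fun _ => (continuous_eval_const _).comp_continuousOn hD2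

end DiscreteMongeAmpere

open DiscreteMongeAmpere

theorem discrete_MA_measures_converge_general (d : ℕ) (Ω : Set (Fin d → ℝ))
    (v : (Fin d → ℝ) → ℝ)
    (hvC2 : ∃ U : Set (Fin d → ℝ), IsOpen U ∧ closure Ω ⊆ U ∧ ContDiffOn ℝ 2 v U)
    (M : ℝ → (Fin d → ℝ) → ℝ)
    (hconsist : ∀ hk : ℕ → ℝ, (∀ k, 0 < hk k) → Tendsto hk atTop (nhds 0) →
      ∀ (xk : ℕ → (Fin d → ℝ)) (x : Fin d → ℝ), x ∈ Ω →
        (∀ k, xk k ∈ Ω ∩ latticeSet d (hk k)) → Tendsto xk atTop (nhds x) →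
        Tendsto (fun k => M (hk k) (xk k)) atTop (nhds (hessDet d v x)))
    (B : Set (Fin d → ℝ)) (hBmeas : MeasurableSet B) (hBΩ : B ⊆ Ω)
    (hBcl : IsCompact (closure B)) (hBclΩ : closure B ⊆ Ω)
    (hBfr : volume (frontier B) = 0) :
    Tendsto (fun h : ℝ => h ^ d * ∑ᶠ x ∈ B ∩ (Ω ∩ latticeSet d h), M h x)
      (nhdsWithin 0 (Set.Ioi 0)) (nhds (∫ x in B, hessDet d v x)) := by
  obtain ⟨U, hU, hΩU, hv⟩ := hvC2
  have hBb : IsBounded B := hBcl.isBounded.subset subset_closure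
  have hf : ContinuousOn (hessDet d v) (closure B) :=
    (hv.continuousOn_hessDet hU).mono (hBclΩ.trans (subset_closure.trans hΩU))
  have hpos : ∀ᶠ h in 𝓝[>] (0 : ℝ), 0 < h := self_mem_nhdsWithin
  have hcount : ∀ᶠ h in 𝓝[>] (0 : ℝ), h ^ d * (B ∩ latticeSet d h).ncard ≤ volume.real B + 1 :=
    (tendsto_mul_ncard_latticeSet hBmeas hBb hBfr).eventually (ge_mem_nhds (lt_add_one _))
  have herror : Tendsto (fun h => h ^ d * ∑ᶠ x ∈ B ∩ latticeSet d h, (M h x - hessDet d v x))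
      (𝓝[>] 0) (𝓝 0) :=
    tendsto_mul_finsum_mem_zero_of_uniform
      (hpos.mono fun h hh => pow_nonneg hh.le d)
      (hpos.mono fun h hh => hBb.finite_inter_latticeSet hh) hcount
      fun ε hε => (ConsistentOn.eventually_forall_abs_sub_le hconsist hBcl hBclΩ hf hε).mono
        fun h hh x hx => hh x ⟨subset_closure hx.1, hx.2⟩
  have hBΩlat : ∀ h, B ∩ (Ω ∩ latticeSet d h) = B ∩ latticeSet d h := fun h => by
    rw [← inter_assoc, inter_eq_left.2 hBΩ]
  simp_rw [hBΩlat]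
  refine (zero_add (∫ x in B, hessDet d v x) ▸
    herror.add (tendsto_mul_finsum_latticeSet hBmeas hBb hBfr hf)).congr' ?_
  filter_upwards [hpos] with h hh
  rw [← mul_add, ← finsum_mem_add_distrib (hBb.finite_inter_latticeSet hh)]
  simp only [sub_add_cancel]

/-- Let Ω ⊆ ℝ^d be open, bounded and convex, and let v be C² on an
open neighborhood of the closure of Ω and convex on Ω.  Let M_h be a family of
discretizations which is consistent at v: whenever h_k → 0⁺ and x_k ∈ Ω_{h_k}
with x_k → x ∈ Ω, one has M_{h_k}[r_{h_k} v](x_k) → det D²v(x).  Then for every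
Borel set B ⊆ Ω with compact closure contained in Ω and whose boundary has
Lebesgue measure zero, h^d ∑_{x ∈ B ∩ Ω_h} M_h[r_h v](x) → ∫_B det D²v(x) dx
as h → 0⁺. -/
theorem discrete_MA_measures_converge (d : ℕ) (Ω : Set (Fin d → ℝ))
    (hΩopen : IsOpen Ω) (hΩbdd : Bornology.IsBounded Ω) (hΩconv : Convex ℝ Ω)
    (v : (Fin d → ℝ) → ℝ)
    (hvC2 : ∃ U : Set (Fin d → ℝ), IsOpen U ∧ closure Ω ⊆ U ∧ ContDiffOn ℝ 2 v U)
    (hvconv : ConvexOn ℝ Ω v)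
    (M : ℝ → (Fin d → ℝ) → ℝ)
    (hconsist : ∀ hk : ℕ → ℝ, (∀ k, 0 < hk k) → Tendsto hk atTop (nhds 0) →
      ∀ (xk : ℕ → (Fin d → ℝ)) (x : Fin d → ℝ), x ∈ Ω →
        (∀ k, xk k ∈ Ω ∩ latticeSet d (hk k)) → Tendsto xk atTop (nhds x) →
        Tendsto (fun k => M (hk k) (xk k)) atTop (nhds (hessDet d v x)))
    (B : Set (Fin d → ℝ)) (hBmeas : MeasurableSet B) (hBΩ : B ⊆ Ω)
    (hBcl : IsCompact (closure B)) (hBclΩ : closure B ⊆ Ω)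
    (hBfr : volume (frontier B) = 0) :
    Tendsto (fun h : ℝ => h ^ d * ∑ᶠ x ∈ B ∩ (Ω ∩ latticeSet d h), M h x)
      (nhdsWithin 0 (Set.Ioi 0)) (nhds (∫ x in B, hessDet d v x)) :=
  discrete_MA_measures_converge_general d Ω v hvC2 M hconsist B hBmeas hBΩ hBcl hBclΩ hBfr
end

section
/- Let Ω ⊆ ℝ^d be open and convex, let (h_k) be a sequence of positive mesh sizes with h_k → 0, and for each k let v_k : ℝ^d → ℝ be a function whose restriction to the lattice h_kℤ^d is discrete convex on Ω, i.e., for every x ∈ Ω ∩ h_kℤ^d and every e ∈ h_kℤ^d with x + e ∈ Ω ∩ h_kℤ^d and x − e ∈ Ω ∩ h_kℤ^d, one has v_k(x + e) − 2 v_k(x) + v_k(x − e) ≥ 0. Let v : Ω → ℝ be continuous and suppose v_k converges to v uniformly on compact subsets of Ω in the mesh sense: for every compact K ⊆ Ω, max_{x ∈ K ∩ h_kℤ^d} |v_k(x) − v(x)| → 0 as k → ∞. Then v is convex on Ω. -/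
/-!
Discrete convexity passes to the limit with arbitrary increments: for `x, x ± e ∈ Ω`, round `x`
and `e` coordinatewise to lattice points `p_k, q_k` of `h_k ℤ^d`; the second differences of `v_k`
at `p_k` with increment `q_k` are nonnegative, and by uniform convergence on a compact
neighbourhood together with continuity of `v` they converge to `v (x + e) - 2 v x + v (x - e)`.
Hence `v` is midpoint convex, and a continuous midpoint convex function is convex: on a segment,
the parameters at which the convexity inequality holds form a closed set containing `0` and `1`
and closed under midpoints, so it contains the dyadic rationals and therefore all of `[0, 1]`.
-/

open Filter

open Set Topology

def DiscreteConvexOn {E : Type*} [AddCommGroup E] (Ω L : Set E) (u : E → ℝ) : Prop :=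
  ∀ x ∈ Ω ∩ L, ∀ e ∈ L, x + e ∈ Ω ∩ L → x - e ∈ Ω ∩ L → 0 ≤ u (x + e) - 2 * u x + u (x - e)

section LocallyUniformLimit

variable {E : Type*} [TopologicalSpace E] {Ω : Set E} {L : ℕ → Set E} {u : ℕ → E → ℝ}
  {v : E → ℝ}

theorem tendsto_apply_of_uniformOnCompacts [LocallyCompactSpace E] (hΩ : IsOpen Ω)
    (hv : ContinuousOn v Ω)
    (hconv : ∀ K : Set E, K ⊆ Ω → IsCompact K →
      ∀ ε : ℝ, 0 < ε → ∃ N : ℕ, ∀ k, N ≤ k → ∀ x ∈ K ∩ L k, |u k x - v x| < ε)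
    {p : ℕ → E} {z : E} (hz : z ∈ Ω) (hp : Tendsto p atTop (𝓝 z)) (hpL : ∀ k, p k ∈ L k) :
    Tendsto (fun k => u k (p k)) atTop (𝓝 (v z)) := by
  obtain ⟨K, hK, hzK, hKΩ⟩ := exists_compact_subset hΩ hz
  have hpK : ∀ᶠ k in atTop, p k ∈ K :=
    (hp.eventually (mem_interior_iff_mem_nhds.mp hzK)).mono fun _ hk => hk
  have hdiff : Tendsto (fun k => u k (p k) - v (p k)) atTop (𝓝 0) := by
    refine Metric.tendsto_nhds.mpr fun ε hε => ?_
    obtain ⟨N, hN⟩ := hconv K hKΩ hK ε hε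
    filter_upwards [eventually_ge_atTop N, hpK] with k hk hkK
    simpa [Real.dist_eq] using hN k hk (p k) ⟨hkK, hpL k⟩
  simpa using hdiff.add ((hv.continuousAt (hΩ.mem_nhds hz)).tendsto.comp hp)

end LocallyUniformLimit

section LimitOfDiscreteConvex

variable {E : Type*} [TopologicalSpace E] [AddCommGroup E] [IsTopologicalAddGroup E]
  [LocallyCompactSpace E] {Ω : Set E} {L : ℕ → AddSubgroup E} {u : ℕ → E → ℝ} {v : E → ℝ}

theorem discreteConvexOn_univ_of_tendsto (hΩ : IsOpen Ω)
    (hL : ∀ z : E, ∃ p : ℕ → E, (∀ k, p k ∈ L k) ∧ Tendsto p atTop (𝓝 z))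
    (hu : ∀ k, DiscreteConvexOn Ω (L k) (u k)) (hv : ContinuousOn v Ω)
    (hconv : ∀ K : Set E, K ⊆ Ω → IsCompact K →
      ∀ ε : ℝ, 0 < ε → ∃ N : ℕ, ∀ k, N ≤ k → ∀ x ∈ K ∩ (L k : Set E), |u k x - v x| < ε) :
    DiscreteConvexOn Ω univ v := by
  rintro x ⟨hx, -⟩ e - ⟨hxe, -⟩ ⟨hxe', -⟩
  obtain ⟨p, hpL, hp⟩ := hL x
  obtain ⟨q, hqL, hq⟩ := hL e
  have lim : ∀ {r : ℕ → E} {z : E}, z ∈ Ω → Tendsto r atTop (𝓝 z) → (∀ k, r k ∈ L k) →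
      Tendsto (fun k => u k (r k)) atTop (𝓝 (v z)) :=
    tendsto_apply_of_uniformOnCompacts hΩ hv hconv
  have hsum := (lim hxe (hp.add hq) fun k => add_mem (hpL k) (hqL k)).sub
    ((lim hx hp hpL).const_mul 2) |>.add (lim hxe' (hp.sub hq) fun k => sub_mem (hpL k) (hqL k))
  refine ge_of_tendsto hsum ?_
  filter_upwards [hp.eventually (hΩ.mem_nhds hx), (hp.add hq).eventually (hΩ.mem_nhds hxe),
    (hp.sub hq).eventually (hΩ.mem_nhds hxe')] with k hk hk' hk''
  exact hu k (p k) ⟨hk, hpL k⟩ (q k) (hqL k) ⟨hk', add_mem (hpL k) (hqL k)⟩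
    ⟨hk'', sub_mem (hpL k) (hqL k)⟩

end LimitOfDiscreteConvex

theorem Icc_subset_of_isClosed_of_add_div_two_mem {S : Set ℝ} (hS : IsClosed S) (h0 : (0 : ℝ) ∈ S)
    (h1 : (1 : ℝ) ∈ S) (hmid : ∀ a ∈ S, ∀ b ∈ S, (a + b) / 2 ∈ S) : Icc 0 1 ⊆ S := by
  have dyadic : ∀ n j : ℕ, j ≤ 2 ^ n → (j : ℝ) / 2 ^ n ∈ S := by
    intro n
    induction n with
    | zero =>
      intro j hj
      interval_cases j <;> simpa
    | succ n ih =>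
      intro j hj
      rcases le_or_gt j (2 ^ n) with hle | hgt
      · convert hmid 0 h0 _ (ih j hle) using 1
        rw [pow_succ]; ring
      · obtain ⟨i, rfl⟩ := Nat.exists_eq_add_of_lt hgt
        convert hmid 1 h1 _ (ih (i + 1) (by rw [pow_succ] at hj; omega)) using 1
        rw [pow_succ]; push_cast; field_simp; ring
  rintro t ⟨ht0, ht1⟩
  have hpow : Tendsto (fun n : ℕ => (2 : ℝ) ^ n) atTop atTop :=
    tendsto_pow_atTop_atTop_of_one_lt one_lt_two
  refine hS.mem_of_tendsto ((tendsto_nat_floor_mul_div_atTop ht0).comp hpow) ?_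
  refine Eventually.of_forall fun n => dyadic n _ (Nat.floor_le_of_le ?_)
  push_cast
  nlinarith [pow_pos (two_pos : (0 : ℝ) < 2) n]

theorem DiscreteConvexOn.convexOn {E : Type*} [AddCommGroup E] [Module ℝ E] [TopologicalSpace E]
    [ContinuousAdd E] [ContinuousSMul ℝ E] {s : Set E} {f : E → ℝ} (hf : DiscreteConvexOn s univ f)
    (hs : Convex ℝ s) (hfc : ContinuousOn f s) : ConvexOn ℝ s f := by
  refine ⟨hs, fun x hx y hy a b ha hb hab => ?_⟩
  obtain rfl : b = 1 - a := by linarith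
  set c : ℝ → E := fun t => t • x + (1 - t) • y
  have hcs : ∀ t ∈ Icc (0 : ℝ) 1, c t ∈ s := fun t ht =>
    hs hx hy ht.1 (by linarith [ht.2]) (by ring)
  let S := Icc (0 : ℝ) 1 ∩ (fun t => t * f x + (1 - t) * f y - f (c t)) ⁻¹' Ici 0
  have hS : IsClosed S := by
    refine ContinuousOn.preimage_isClosed_of_isClosed ?_ isClosed_Icc isClosed_Ici
    have hc : Continuous c := by fun_prop
    exact (by fun_prop : Continuous fun t : ℝ => t * f x + (1 - t) * f y).continuousOn.sub
      (hfc.comp hc.continuousOn hcs)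
  have hmid : ∀ t ∈ S, ∀ r ∈ S, (t + r) / 2 ∈ S := by
    rintro t ⟨ht, hft⟩ r ⟨hr, hfr⟩
    have hm : (t + r) / 2 ∈ Icc (0 : ℝ) 1 := ⟨by linarith [ht.1, hr.1], by linarith [ht.2, hr.2]⟩
    have hplus : c ((t + r) / 2) + ((r - t) / 2) • (x - y) = c r := by module
    have hminus : c ((t + r) / 2) - ((r - t) / 2) • (x - y) = c t := by module
    have hsecond := hf (c ((t + r) / 2)) ⟨hcs _ hm, trivial⟩ (((r - t) / 2) • (x - y)) trivial
      ⟨hplus ▸ hcs r hr, trivial⟩ ⟨hminus ▸ hcs t ht, trivial⟩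
    rw [hplus, hminus] at hsecond
    refine ⟨hm, ?_⟩
    simp only [mem_preimage, mem_Ici] at hft hfr ⊢
    linarith
  have hsub := Icc_subset_of_isClosed_of_add_div_two_mem hS (by simp [S, c]) (by simp [S, c]) hmid
    ⟨ha, by linarith⟩
  simp only [S, mem_inter_iff, mem_preimage, mem_Ici] at hsub
  simp only [smul_eq_mul]
  linarith [hsub.2]

def latticeAddSubgroup (d : ℕ) (h : ℝ) : AddSubgroup (Fin d → ℝ) where
  carrier := latticeSet d h
  add_mem' := by
    rintro _ _ ⟨m, rfl⟩ ⟨n, rfl⟩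
    exact ⟨m + n, by ext; simp only [Pi.add_apply]; push_cast; ring⟩
  zero_mem' := ⟨0, by ext; simp⟩
  neg_mem' := by
    rintro _ ⟨m, rfl⟩
    exact ⟨-m, by ext; simp only [Pi.neg_apply]; push_cast; ring⟩

theorem dist_round_mul_le {d : ℕ} {h : ℝ} (hh : 0 < h) (z : Fin d → ℝ) :
    dist (fun i => (round (z i / h) : ℝ) * h) z ≤ h / 2 := by
  refine (dist_pi_le_iff (by positivity)).mpr fun i => ?_
  have hround : (round (z i / h) : ℝ) * h - z i = -((z i / h - round (z i / h)) * h) := by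
    field_simp; ring
  rw [Real.dist_eq, hround, abs_neg, abs_mul, abs_of_pos hh]
  nlinarith [abs_sub_round (z i / h)]

theorem exists_tendsto_mem_latticeAddSubgroup {d : ℕ} {h : ℕ → ℝ} (hpos : ∀ k, 0 < h k)
    (hto0 : Tendsto h atTop (𝓝 0)) (z : Fin d → ℝ) :
    ∃ p : ℕ → Fin d → ℝ, (∀ k, p k ∈ latticeAddSubgroup d (h k)) ∧ Tendsto p atTop (𝓝 z) := by
  refine ⟨fun k i => (round (z i / h k) : ℝ) * h k, fun k => ⟨_, rfl⟩, ?_⟩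
  refine tendsto_iff_dist_tendsto_zero.mpr <| squeeze_zero (fun _ => dist_nonneg)
    (fun k => dist_round_mul_le (hpos k) z) ?_
  simpa using hto0.div_const 2

/-- Let Ω ⊆ ℝ^d be open and convex, h_k → 0 a sequence of positive
mesh sizes, and v_k functions whose restrictions to the lattices h_kℤ^d are
discrete convex on Ω.  If v_k converges uniformly on compact subsets of Ω, in
the mesh sense, to a continuous function v : Ω → ℝ, then v is convex on Ω. -/
theorem limit_of_discrete_convex_is_convex (d : ℕ) (Ω : Set (Fin d → ℝ))
    (hΩopen : IsOpen Ω) (hΩconv : Convex ℝ Ω)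
    (h : ℕ → ℝ) (hpos : ∀ k, 0 < h k) (hto0 : Tendsto h atTop (nhds 0))
    (vk : ℕ → (Fin d → ℝ) → ℝ)
    (hdc : ∀ k, ∀ x ∈ Ω ∩ latticeSet d (h k), ∀ e ∈ latticeSet d (h k),
      x + e ∈ Ω ∩ latticeSet d (h k) → x - e ∈ Ω ∩ latticeSet d (h k) →
      0 ≤ vk k (x + e) - 2 * vk k x + vk k (x - e))
    (v : (Fin d → ℝ) → ℝ) (hvcont : ContinuousOn v Ω)
    (hconv : ∀ K : Set (Fin d → ℝ), K ⊆ Ω → IsCompact K →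
      ∀ ε : ℝ, 0 < ε → ∃ N : ℕ, ∀ k, N ≤ k →
        ∀ x ∈ K ∩ latticeSet d (h k), |vk k x - v x| < ε) :
    ConvexOn ℝ Ω v :=
  (discreteConvexOn_univ_of_tendsto (L := fun k => latticeAddSubgroup d (h k)) hΩopen
    (exists_tendsto_mem_latticeAddSubgroup hpos hto0) hdc hvcont hconv).convexOn hΩconv hvcont
end
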